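/- For every w ∈ S_n and 1≤i<n, the left Demazure operator satisfies ϖ_i 𝔊_w(x,t) = 𝔊_{s_i w}(x,t) if ℓ(s_i w)<ℓ(w), and ϖ_i 𝔊_w(x,t) = −β·𝔊_w(x,t) if ℓ(s_i w)>ℓ(w). -/

import Mathlib

open MvPolynomial

noncomputable section

namespace BPDPuzzle

/-- `x ⊖ y = (x - y)/(1 + β·y)`. -/
def ominus {K : Type*} [Field K] (β a b : K) : K := (a - b) / (1 + β * b)

/-- A permutation of `ℕ` lying in `S_∞`, i.e. fixing all sufficiently large integers. -/
def FinPerm (w : Equiv.Perm ℕ) : Prop := ∃ N : ℕ, ∀ j, N ≤ j → w j = j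

/-- A permutation of `ℕ` lying in `S_n` (0-based positions `0, …, n-1`). -/
def InSn (n : ℕ) (w : Equiv.Perm ℕ) : Prop := ∀ j, n ≤ j → w j = j

/-- Coxeter length: the number of inversions. -/
def len (w : Equiv.Perm ℕ) : ℕ := Set.ncard {p : ℕ × ℕ | p.1 < p.2 ∧ w p.2 < w p.1}

/-- The simple transposition `s_i`, exchanging the (0-based) positions `i` and `i+1`. -/
def sTr (i : ℕ) : Equiv.Perm ℕ := Equiv.swap i (i + 1)

/-- `u` and `v` have separated descents at position `k`, i.e.
`maxdes(u) ≤ k ≤ mindes(v)` (in 0-based conventions: `u` has no descent at any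
0-based position `≥ k` and `v` has no descent at any 0-based position `< k-1`). -/
def SepDesc (k : ℕ) (u v : Equiv.Perm ℕ) : Prop :=
  (∀ i, k ≤ i → u i ≤ u (i + 1)) ∧ (∀ i, i + 1 < k → v i ≤ v (i + 1))

/-- The longest element `n ⋯ 2 1` of `S_n`, extended by the identity. -/
def revPerm (n : ℕ) : Equiv.Perm ℕ where
  toFun j := if j < n then n - 1 - j else j
  invFun j := if j < n then n - 1 - j else j
  left_inv j := by dsimp only; split_ifs <;> omega
  right_inv j := by dsimp only; split_ifs <;> omega

/-- Exchange the values of a valuation at the indices `i` and `i+1`. -/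
def swapVal {K : Type*} (t : ℕ → K) (i : ℕ) : ℕ → K :=
  fun j => if j = i then t (i + 1) else if j = i + 1 then t i else t j

/-- The defining properties of the family of double Grothendieck polynomials
`𝔊_w(x, t)`, viewed as a family of polynomials in the `x`-variables depending on
a valuation `t` of the second set of variables:  the initial condition
`𝔊_{n⋯21}(x,t) = ∏_{i+j≤n} (x_i ⊖ t_j)` together with the Demazure recursion
`π_i 𝔊_w = 𝔊_{w s_i}` whenever `w(i) > w(i+1)` (the latter written with the
denominator `x_i - x_{i+1}` cleared). -/
def GrothFamily {K : Type*} [Field K] (β : K)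
    (G : (ℕ → K) → Equiv.Perm ℕ → MvPolynomial ℕ K) : Prop :=
  ∀ t : ℕ → K, (∀ j, 1 + β * t j ≠ 0) →
    (∀ n : ℕ, G t (revPerm n) =
      ∏ i ∈ Finset.range n, ∏ j ∈ Finset.range (n - 1 - i),
        C ((1 + β * t j)⁻¹) * (X i - C (t j))) ∧
    (∀ (w : Equiv.Perm ℕ) (i : ℕ), w (i + 1) < w i →
      (X i - X (i + 1)) * G t (w * sTr i) =
        (1 + C β * X (i + 1)) * G t w
          - (1 + C β * X i) * rename ⇑(Equiv.swap i (i + 1)) (G t w))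

/-- The defining property of the structure constants `c_{u,v}^w(t,y)`:
`𝔊_u(x,y) · 𝔊_v(x,t) = Σ_w c_{u,v}^w(t,y) · 𝔊_w(x,t)`, the (finitely supported)
sum ranging over the permutations `w ∈ S_∞`. -/
def StructConsts {K : Type*} [Field K] (β : K)
    (G : (ℕ → K) → Equiv.Perm ℕ → MvPolynomial ℕ K)
    (c : (ℕ → K) → (ℕ → K) → Equiv.Perm ℕ → Equiv.Perm ℕ → Equiv.Perm ℕ → K) : Prop :=
  ∀ t y : ℕ → K, (∀ j, 1 + β * t j ≠ 0) → (∀ j, 1 + β * y j ≠ 0) →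
    ∀ u v : Equiv.Perm ℕ, FinPerm u → FinPerm v →
      {w : Equiv.Perm ℕ | c t y u v w ≠ 0}.Finite ∧
      (∀ w, ¬ FinPerm w → c t y u v w = 0) ∧
      G y u * G t v = ∑ᶠ w : Equiv.Perm ℕ, C (c t y u v w) * G t w

/-! ### The lattice model / pipe puzzles -/

/-- A state of the `n × n` lattice model: labels in `{0, …, n}` on all horizontal
and vertical (half-)edges.  `sst.1 i j` is the `j`-th horizontal (half-)edge of row
`i` (`j = 0` being the left boundary and `j = n` the right boundary), and
`sst.2 i j` is the `i`-th vertical (half-)edge of column `j` (`i = 0` the top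
boundary, `i = n` the bottom boundary). -/
abbrev GridState (n : ℕ) : Type :=
  (Fin n → Fin (n + 1) → Fin (n + 1)) × (Fin (n + 1) → Fin n → Fin (n + 1))

/-- The label on the north edge of the tile in row `i`, column `j`. -/
def labN {n : ℕ} (sst : GridState n) (i j : Fin n) : ℕ := (sst.2 i.castSucc j : ℕ)
/-- The label on the east edge of the tile in row `i`, column `j`. -/
def labE {n : ℕ} (sst : GridState n) (i j : Fin n) : ℕ := (sst.1 i j.succ : ℕ)
/-- The label on the west edge of the tile in row `i`, column `j`. -/
def labW {n : ℕ} (sst : GridState n) (i j : Fin n) : ℕ := (sst.1 i j.castSucc : ℕ)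
/-- The label on the south edge of the tile in row `i`, column `j`. -/
def labS {n : ℕ} (sst : GridState n) (i j : Fin n) : ℕ := (sst.2 i.succ j : ℕ)

/-- Boundary label `κ_u` on the right side (0-based row `i`, 1-based pipe labels). -/
def kappaLab (k : ℕ) (u : Equiv.Perm ℕ) (i : ℕ) : ℕ :=
  if u⁻¹ i < k then u⁻¹ i + 1 else 0

/-- Boundary label `θ_v` on the top side (0-based column `j`, 1-based pipe labels). -/
def thetaLab (k : ℕ) (v : Equiv.Perm ℕ) (j : ℕ) : ℕ :=
  if k ≤ v⁻¹ j then v⁻¹ j + 1 else 0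

/-- Boundary label `η_w` on the bottom side (0-based column `j`, 1-based pipe labels). -/
def etaLab (w : Equiv.Perm ℕ) (j : ℕ) : ℕ := w⁻¹ j + 1

/-- The boundary condition for pipe puzzles for `(u, v, w)`: left edges all `0`,
right edges `κ_u`, top edges `θ_v`, bottom edges `η_w`. -/
def BoundaryCond (n k : ℕ) (u v w : Equiv.Perm ℕ) (sst : GridState n) : Prop :=
  (∀ i : Fin n, (sst.1 i 0 : ℕ) = 0) ∧
  (∀ i : Fin n, (sst.1 i (Fin.last n) : ℕ) = kappaLab k u (i : ℕ)) ∧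
  (∀ j : Fin n, (sst.2 0 j : ℕ) = thetaLab k v (j : ℕ)) ∧
  (∀ j : Fin n, (sst.2 (Fin.last n) j : ℕ) = etaLab w (j : ℕ))

/-- The admissible local configurations (tiles) of a pipe puzzle, in terms of the
four edge labels `N, E, W, S` around a tile:  the empty tile, the vertical pipe,
the horizontal pipe, the crossing (with the horizontal pipe carrying the smaller
label), the two elbows `⌟` and `⌐` (labels `≤ k` coming from the right side,
labels `> k` from the top side), and the bumping tiles (with the stated label
restrictions). -/
def LAdm (k N E W S : ℕ) : Prop :=
  (N = 0 ∧ E = 0 ∧ W = 0 ∧ S = 0) ∨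
  (E = 0 ∧ W = 0 ∧ 0 < N ∧ N = S) ∨
  (N = 0 ∧ S = 0 ∧ 0 < E ∧ E = W) ∨
  (0 < E ∧ E = W ∧ E < N ∧ N = S) ∨
  (E = 0 ∧ S = 0 ∧ 0 < N ∧ N = W ∧ N ≤ k) ∨
  (E = 0 ∧ S = 0 ∧ N = W ∧ k < N) ∨
  (N = 0 ∧ W = 0 ∧ 0 < E ∧ E = S ∧ E ≤ k) ∨
  (N = 0 ∧ W = 0 ∧ E = S ∧ k < E) ∨
  (0 < E ∧ E = S ∧ E < N ∧ N = W ∧ N ≤ k) ∨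
  (k < E ∧ E = S ∧ E < N ∧ N = W) ∨
  (0 < N ∧ N = W ∧ N ≤ k ∧ E = S ∧ k < E)

/-- The admissible local configurations of a Schubert pipe puzzle (no bumping
tiles; crossings have the horizontal pipe carrying the smaller label). -/
def LAdm0 (N E W S : ℕ) : Prop :=
  (N = 0 ∧ E = 0 ∧ W = 0 ∧ S = 0) ∨
  (E = 0 ∧ W = 0 ∧ 0 < N ∧ N = S) ∨
  (N = 0 ∧ S = 0 ∧ 0 < E ∧ E = W) ∨
  (0 < E ∧ E = W ∧ E < N ∧ N = S) ∨
  (E = 0 ∧ S = 0 ∧ 0 < N ∧ N = W) ∨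
  (N = 0 ∧ W = 0 ∧ 0 < E ∧ E = S)

/-- The vertex weight `L(x; N, E, W, S)` of the lattice model (equivalently, the
weight of the corresponding pipe-puzzle tile), with spectral parameter `x`. -/
def Lwt {K : Type*} [Field K] (β : K) (k : ℕ) (x : K) (N E W S : ℕ) : K :=
  if N = 0 ∧ E = 0 ∧ W = 0 ∧ S = 0 then x
  else if E = 0 ∧ W = 0 ∧ 0 < N ∧ N = S then 1
  else if N = 0 ∧ S = 0 ∧ 0 < E ∧ E = W then 1
  else if 0 < E ∧ E = W ∧ E < N ∧ N = S then 1
  else if E = 0 ∧ S = 0 ∧ 0 < N ∧ N = W ∧ N ≤ k then 1 + β * x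
  else if E = 0 ∧ S = 0 ∧ N = W ∧ k < N then 1
  else if N = 0 ∧ W = 0 ∧ 0 < E ∧ E = S ∧ E ≤ k then 1
  else if N = 0 ∧ W = 0 ∧ E = S ∧ k < E then 1 + β * x
  else if 0 < E ∧ E = S ∧ E < N ∧ N = W ∧ N ≤ k then β
  else if k < E ∧ E = S ∧ E < N ∧ N = W then β
  else if 0 < N ∧ N = W ∧ N ≤ k ∧ E = S ∧ k < E then β * (1 + β * x)
  else 0

/-- The set of pipe puzzles for `(u, v, w)` (with separated-descent parameter `k`),
encoded as admissible states of the lattice model. -/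
def PP (n k : ℕ) (u v w : Equiv.Perm ℕ) : Set (GridState n) :=
  {sst | BoundaryCond n k u v w sst ∧
    ∀ i j : Fin n, LAdm k (labN sst i j) (labE sst i j) (labW sst i j) (labS sst i j)}

/-- The set of Schubert pipe puzzles for `(u, v, w)`. -/
def PP0 (n k : ℕ) (u v w : Equiv.Perm ℕ) : Set (GridState n) :=
  {sst | BoundaryCond n k u v w sst ∧
    ∀ i j : Fin n, LAdm0 (labN sst i j) (labE sst i j) (labW sst i j) (labS sst i j)}

/-- The weight `wt(π)` of a pipe puzzle: the product over all tiles, the tile in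
row `i` and column `j` having spectral parameter `t_j ⊖ y_i`. -/
def stateWt {K : Type*} [Field K] (β : K) (k : ℕ) (t y : ℕ → K) {n : ℕ}
    (sst : GridState n) : K :=
  ∏ i : Fin n, ∏ j : Fin n,
    Lwt β k (ominus β (t (j : ℕ)) (y (i : ℕ)))
      (labN sst i j) (labE sst i j) (labW sst i j) (labS sst i j)

/-- The Schubert weight `wt₀(π)`: the product of `t_j - y_i` over the positions
`(i, j)` of the empty tiles. -/
def stateWt0 {K : Type*} [Field K] (t y : ℕ → K) {n : ℕ} (sst : GridState n) : K :=
  ∏ i : Fin n, ∏ j : Fin n,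
    if labN sst i j = 0 ∧ labE sst i j = 0 ∧ labW sst i j = 0 ∧ labS sst i j = 0
    then t (j : ℕ) - y (i : ℕ) else 1

/-!
Downward induction from the longest element `w₀ = n⋯21` along the recursion
`𝔊_{w s_j} = π_j 𝔊_w`. Since `ϖ_i` acts on `t` and `π_j` on `x`, the two commute, so
`ϖ_i 𝔊_{w s_j} = π_j ϖ_i 𝔊_w`; the induction hypothesis for `w` then gives the claim for
`w s_j` in each of the three possible cases: `s_i w > w`; `s_i w < w` with `s_i w = w s_j`,
where `π_j` acts on its own (symmetric) image as `-β`; and `s_i w < w` otherwise, where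
`π_j 𝔊_{s_i w} = 𝔊_{s_i w s_j}`.

For `w₀` one has `s_i w₀ = w₀ s_{n-2-i}`, and apart from the corner factor
`x_{n-2-i} ⊖ t_i` the staircase product `𝔊_{w₀}` is symmetric in `t_i, t_{i+1}` and in
`x_{n-2-i}, x_{n-1-i}`; both `ϖ_i` and `π_{n-2-i}` send that corner factor to `1`.
-/

namespace InSn

variable {n : ℕ} {u v : Equiv.Perm ℕ}

theorem lt (hu : InSn n u) {j : ℕ} (hj : j < n) : u j < n := by
  by_contra! h
  have := u.injective (hu _ h)
  omega

theorem inv (hu : InSn n u) : InSn n u⁻¹ := fun j hj => by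
  rw [Equiv.Perm.inv_eq_iff_eq, hu j hj]

theorem mul (hu : InSn n u) (hv : InSn n v) : InSn n (u * v) := fun j hj => by
  rw [Equiv.Perm.mul_apply, hv j hj, hu j hj]

end InSn

theorem inSn_sTr {n j : ℕ} (hj : j + 1 < n) : InSn n (sTr j) := fun a ha => by
  rw [sTr, Equiv.swap_apply_of_ne_of_ne] <;> omega

theorem inSn_revPerm (n : ℕ) : InSn n (revPerm n) := fun j hj => if_neg (by omega)

theorem revPerm_apply {n j : ℕ} (hj : j < n) : revPerm n j = n - 1 - j := if_pos hj

theorem revPerm_inv_apply {n j : ℕ} (hj : j < n) : (revPerm n)⁻¹ j = n - 1 - j := if_pos hj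

@[simp] theorem sTr_apply_left (j : ℕ) : sTr j j = j + 1 := Equiv.swap_apply_left _ _

@[simp] theorem sTr_apply_right (j : ℕ) : sTr j (j + 1) = j := Equiv.swap_apply_right _ _

@[simp] theorem sTr_inv (j : ℕ) : (sTr j)⁻¹ = sTr j := Equiv.swap_inv _ _

@[simp] theorem sTr_mul_self (j : ℕ) : sTr j * sTr j = 1 := Equiv.swap_mul_self _ _

theorem sTr_lt_sTr {j a b : ℕ} (hab : a < b) (h : ¬(a = j ∧ b = j + 1)) :
    sTr j a < sTr j b := by
  simp only [sTr, Equiv.swap_apply_def]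
  split_ifs <;> omega

theorem sTr_mul_revPerm {n i : ℕ} (hi : i + 1 < n) :
    sTr i * revPerm n = revPerm n * sTr (n - 2 - i) := by
  ext j
  simp only [Equiv.Perm.mul_apply, sTr, Equiv.swap_apply_def, revPerm,
    Equiv.coe_fn_mk]
  split_ifs <;> omega

theorem InSn.eq_revPerm_of_forall_lt {n : ℕ} {u : Equiv.Perm ℕ} (hu : InSn n u)
    (h : ∀ j, j + 1 < n → u (j + 1) < u j) : u = revPerm n := by
  have upper : ∀ j, j < n → u j + j ≤ n - 1 := by
    intro j
    induction j with
    | zero => intro h0; have := hu.lt h0; omega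
    | succ k ih => intro hk; have := h k hk; have := ih (by omega); omega
  have lower : ∀ d, d < n → d ≤ u (n - 1 - d) := by
    intro d
    induction d with
    | zero => intro; omega
    | succ k ih =>
      intro hk
      have := h (n - 1 - (k + 1)) (by omega)
      rw [show n - 1 - (k + 1) + 1 = n - 1 - k by omega] at this
      have := ih (by omega)
      omega
  ext j
  by_cases hj : j < n
  · have := upper j hj
    have := lower (n - 1 - j) (by omega)
    rw [show n - 1 - (n - 1 - j) = j by omega] at this
    rw [revPerm_apply hj]
    omega
  · rw [hu j (by omega), inSn_revPerm n j (by omega)]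

theorem InSn.exists_lt_of_ne_revPerm {n : ℕ} {u : Equiv.Perm ℕ} (hu : InSn n u)
    (hne : u ≠ revPerm n) : ∃ j, j + 1 < n ∧ u j < u (j + 1) := by
  by_contra! h
  refine hne (hu.eq_revPerm_of_forall_lt fun j hj => ?_)
  have := u.injective.ne (show j + 1 ≠ j by omega)
  have := h j hj
  omega

def inversions (u : Equiv.Perm ℕ) : Set (ℕ × ℕ) := {p | p.1 < p.2 ∧ u p.2 < u p.1}

theorem len_eq_ncard_inversions (u : Equiv.Perm ℕ) : len u = (inversions u).ncard := rfl

theorem InSn.inversions_subset {n : ℕ} {u : Equiv.Perm ℕ} (hu : InSn n u) :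
    inversions u ⊆ Set.Iio n ×ˢ Set.Iio n := by
  rintro ⟨a, b⟩ ⟨hab, hinv⟩
  dsimp only at hab hinv
  simp only [Set.mem_prod, Set.mem_Iio]
  by_contra! h
  by_cases hb : b < n
  · exact absurd (h (hab.trans hb)) (not_le.mpr hb)
  · have := hu b (by omega)
    by_cases ha : a < n
    · have := hu.lt ha; omega
    · have := hu a (by omega); omega

theorem InSn.len_le {n : ℕ} {u : Equiv.Perm ℕ} (hu : InSn n u) : len u ≤ n * n := by
  calc len u ≤ (Set.Iio n ×ˢ Set.Iio n).ncard :=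
        Set.ncard_le_ncard hu.inversions_subset ((Set.finite_Iio n).prod (Set.finite_Iio n))
    _ = n * n := by
        rw [Set.ncard_prod, Set.ncard_Iio_nat]

theorem len_inv (u : Equiv.Perm ℕ) : len u⁻¹ = len u := by
  have : inversions u⁻¹ = (fun p => (u p.2, u p.1)) '' inversions u := by
    ext ⟨a, b⟩
    constructor
    · rintro ⟨hab, hinv⟩
      exact ⟨(u⁻¹ b, u⁻¹ a), ⟨hinv, by simpa using hab⟩, by simp⟩
    · rintro ⟨⟨a', b'⟩, ⟨hab', hinv'⟩, he⟩
      simp only [Prod.mk.injEq] at he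
      obtain ⟨rfl, rfl⟩ := he
      exact ⟨hinv', by simpa using hab'⟩
  rw [len_eq_ncard_inversions, this, Set.ncard_image_of_injective]
  · rfl
  · rintro ⟨a, b⟩ ⟨a', b'⟩ h
    simp only [Prod.mk.injEq, EmbeddingLike.apply_eq_iff_eq] at h
    simp [h]

theorem InSn.len_mul_sTr {n j : ℕ} {u : Equiv.Perm ℕ} (hu : InSn n u)
    (h : u j < u (j + 1)) : len (u * sTr j) = len u + 1 := by
  let σ : ℕ × ℕ → ℕ × ℕ := fun p => (sTr j p.1, sTr j p.2)
  have hσ : σ.Injective := fun p q hpq => by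
    simp only [σ, Prod.mk.injEq, EmbeddingLike.apply_eq_iff_eq] at hpq
    exact Prod.ext hpq.1 hpq.2
  have hσσ : ∀ a, sTr j (sTr j a) = a := Equiv.swap_apply_self _ _
  have hinv : inversions (u * sTr j) = insert (j, j + 1) (σ '' inversions u) := by
    ext ⟨a, b⟩
    simp only [inversions, Set.mem_insert_iff, Set.mem_image, Set.mem_ofPred_eq,
      Equiv.Perm.mul_apply, Prod.mk.injEq, Prod.exists, σ]
    constructor
    · rintro ⟨hab, hba⟩
      by_cases hp : a = j ∧ b = j + 1
      · exact Or.inl hp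
      · exact Or.inr ⟨sTr j a, sTr j b, ⟨sTr_lt_sTr hab hp, hba⟩, hσσ a, hσσ b⟩
    · rintro (⟨rfl, rfl⟩ | ⟨a, b, ⟨hab, hba⟩, rfl, rfl⟩)
      · rw [sTr_apply_left, sTr_apply_right]
        exact ⟨by omega, h⟩
      · rw [hσσ, hσσ]
        refine ⟨sTr_lt_sTr hab ?_, hba⟩
        rintro ⟨rfl, rfl⟩
        omega
  have hfin : (inversions u).Finite :=
    ((Set.finite_Iio n).prod (Set.finite_Iio n)).subset hu.inversions_subset
  rw [len_eq_ncard_inversions, hinv, Set.ncard_insert_of_notMem ?_ (hfin.image σ),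
    Set.ncard_image_of_injective _ hσ, len_eq_ncard_inversions]
  rintro ⟨⟨a, b⟩, ⟨hab, -⟩, he⟩
  simp only [σ, Prod.mk.injEq] at he
  rw [← hσσ a, ← hσσ b, he.1, he.2, sTr_apply_left, sTr_apply_right] at hab
  omega

theorem InSn.len_sTr_mul {n i : ℕ} {u : Equiv.Perm ℕ} (hu : InSn n u)
    (h : u⁻¹ i < u⁻¹ (i + 1)) : len (sTr i * u) = len u + 1 := by
  rw [← len_inv, mul_inv_rev, sTr_inv, hu.inv.len_mul_sTr h, len_inv]

theorem InSn.len_sTr_mul_of_gt {n i : ℕ} {u : Equiv.Perm ℕ} (hu : InSn n u) (hi : i + 1 < n)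
    (h : u⁻¹ (i + 1) < u⁻¹ i) : len u = len (sTr i * u) + 1 := by
  have hsu : (sTr i * u)⁻¹ i < (sTr i * u)⁻¹ (i + 1) := by
    simpa [mul_inv_rev] using h
  have := ((inSn_sTr hi).mul hu).len_sTr_mul hsu
  rwa [← mul_assoc, sTr_mul_self, one_mul] at this

theorem InSn.induction_revPerm {n : ℕ} {P : Equiv.Perm ℕ → Prop} (base : P (revPerm n))
    (step : ∀ w j, InSn n w → j + 1 < n → w (j + 1) < w j → P w → P (w * sTr j))
    {w : Equiv.Perm ℕ} (hw : InSn n w) : P w := by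
  induction h : n * n - len w using Nat.strong_induction_on generalizing w with
  | _ k ih =>
    by_cases hne : w = revPerm n
    · exact hne ▸ base
    obtain ⟨j, hj, hasc⟩ := hw.exists_lt_of_ne_revPerm hne
    have hw' : InSn n (w * sTr j) := hw.mul (inSn_sTr hj)
    have hlen := hw.len_mul_sTr hasc
    have := hw'.len_le
    have hdesc : (w * sTr j) (j + 1) < (w * sTr j) j := by simpa using hasc
    simpa [mul_assoc] using step _ j hw' hj hdesc (ih _ (by omega) hw' rfl)

theorem swapVal_eq_comp {K : Type*} (t : ℕ → K) (i : ℕ) :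
    swapVal t i = t ∘ Equiv.swap i (i + 1) := by
  funext j
  simp only [swapVal, Function.comp_apply, Equiv.swap_apply_def]
  split_ifs <;> simp_all

theorem one_add_mul_swapVal_ne_zero {K : Type*} [Semiring K] {β : K} {t : ℕ → K}
    (ht : ∀ j, 1 + β * t j ≠ 0) (i j : ℕ) : 1 + β * swapVal t i j ≠ 0 := by
  rw [swapVal_eq_comp]
  exact ht _

section Demazure

variable {K : Type*} [Field K] {β : K}

/-- The numerator `(x_j - x_{j+1}) π_j` of the Demazure operator `π_j`. -/
def demazureNum (β : K) (j : ℕ) : MvPolynomial ℕ K →ₗ[K] MvPolynomial ℕ K :=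
  LinearMap.mulLeft K (1 + C β * X (j + 1)) -
    LinearMap.mulLeft K (1 + C β * X j) ∘ₗ (rename (Equiv.swap j (j + 1))).toLinearMap

theorem demazureNum_apply (β : K) (j : ℕ) (f : MvPolynomial ℕ K) :
    demazureNum β j f =
      (1 + C β * X (j + 1)) * f - (1 + C β * X j) * rename (Equiv.swap j (j + 1)) f := rfl

theorem X_sub_X_succ_ne_zero (j : ℕ) : (X j - X (j + 1) : MvPolynomial ℕ K) ≠ 0 :=
  sub_ne_zero.mpr (X_injective.ne (by omega))

theorem rename_swap_rename_swap (j : ℕ) (f : MvPolynomial ℕ K) :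
    rename (Equiv.swap j (j + 1)) (rename (Equiv.swap j (j + 1)) f) = f := by
  rw [rename_rename, ← Equiv.coe_trans, Equiv.swap_swap, Equiv.coe_refl, rename_id_apply]

theorem rename_swap_demazureNum (j : ℕ) (f : MvPolynomial ℕ K) :
    rename (Equiv.swap j (j + 1)) (demazureNum β j f) = -demazureNum β j f := by
  simp only [demazureNum_apply, map_sub, map_mul, map_add, map_one, rename_C, rename_X,
    Equiv.swap_apply_left, Equiv.swap_apply_right, rename_swap_rename_swap]
  ring

theorem rename_swap_eq_of_mul_eq_demazureNum {j : ℕ} {f g : MvPolynomial ℕ K}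
    (h : (X j - X (j + 1)) * g = demazureNum β j f) :
    rename (Equiv.swap j (j + 1)) g = g := by
  have := congrArg (rename (Equiv.swap j (j + 1))) h
  rw [rename_swap_demazureNum, ← h, map_mul, map_sub, rename_X, rename_X,
    Equiv.swap_apply_left, Equiv.swap_apply_right] at this
  exact mul_left_cancel₀ (X_sub_X_succ_ne_zero j) (by linear_combination -this)

theorem demazureNum_of_rename_swap_eq {j : ℕ} {g : MvPolynomial ℕ K}
    (h : rename (Equiv.swap j (j + 1)) g = g) :
    demazureNum β j g = -(C β * ((X j - X (j + 1)) * g)) := by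
  rw [demazureNum_apply, h]
  ring

/-- The left Demazure operator `ϖ_i`, for a polynomial `F t` depending on the valuation `t`
of the second set of variables. -/
def leftDemazure (β : K) (i : ℕ) (F : (ℕ → K) → MvPolynomial ℕ K) (t : ℕ → K) :
    MvPolynomial ℕ K :=
  C ((t i - t (i + 1))⁻¹) *
    (-(C (1 + β * t i) * F t - C (1 + β * t (i + 1)) * F (swapVal t i)))

theorem map_leftDemazure (L : MvPolynomial ℕ K →ₗ[K] MvPolynomial ℕ K) (i : ℕ)
    (F : (ℕ → K) → MvPolynomial ℕ K) (t : ℕ → K) :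
    L (leftDemazure β i F t) = leftDemazure β i (L ∘ F) t := by
  simp only [leftDemazure, C_mul', map_smul, map_neg, map_sub, Function.comp_apply]

end Demazure

section Staircase

variable {K : Type*} [Field K] (β : K)

def staircase (n : ℕ) : Finset (ℕ × ℕ) :=
  (Finset.range n ×ˢ Finset.range n).filter fun p => p.1 + p.2 + 1 < n

/-- The factor `x_a ⊖ t_b` of `𝔊_{n⋯21}`. -/
def stairFactor (t : ℕ → K) (p : ℕ × ℕ) : MvPolynomial ℕ K :=
  C ((1 + β * t p.2)⁻¹) * (X p.1 - C (t p.2))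

theorem mem_staircase {n : ℕ} {p : ℕ × ℕ} : p ∈ staircase n ↔ p.1 + p.2 + 1 < n := by
  simp only [staircase, Finset.mem_filter, Finset.mem_product, Finset.mem_range]
  omega

theorem mem_staircase_erase {n : ℕ} {q p : ℕ × ℕ} :
    p ∈ (staircase n).erase q ↔ ¬(p.1 = q.1 ∧ p.2 = q.2) ∧ p.1 + p.2 + 1 < n := by
  rw [Finset.mem_erase, mem_staircase, ne_eq, Prod.ext_iff]

theorem prod_staircase_erase_swapVal (t : ℕ → K) {n i : ℕ} (hi : i + 1 < n) :
    ∏ p ∈ (staircase n).erase (n - 2 - i, i), stairFactor β (swapVal t i) p =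
      ∏ p ∈ (staircase n).erase (n - 2 - i, i), stairFactor β t p := by
  refine Finset.prod_equiv ((Equiv.refl ℕ).prodCongr (Equiv.swap i (i + 1))) ?_ ?_
  · rintro ⟨a, b⟩
    simp only [mem_staircase_erase, Equiv.prodCongr_apply, Prod.map, Equiv.refl_apply,
      Equiv.swap_apply_def]
    split_ifs <;> omega
  · rintro ⟨a, b⟩ -
    simp [stairFactor, swapVal_eq_comp]

theorem rename_prod_staircase_erase (t : ℕ → K) {n i : ℕ} (hi : i + 1 < n) :
    rename (Equiv.swap (n - 2 - i) (n - 2 - i + 1))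
        (∏ p ∈ (staircase n).erase (n - 2 - i, i), stairFactor β t p) =
      ∏ p ∈ (staircase n).erase (n - 2 - i, i), stairFactor β t p := by
  rw [map_prod]
  refine Finset.prod_equiv ((Equiv.swap (n - 2 - i) (n - 2 - i + 1)).prodCongr (Equiv.refl ℕ))
    ?_ ?_
  · rintro ⟨a, b⟩
    simp only [mem_staircase_erase, Equiv.prodCongr_apply, Prod.map, Equiv.refl_apply,
      Equiv.swap_apply_def]
    split_ifs <;> omega
  · rintro ⟨a, b⟩ -
    simp [stairFactor]

end Staircase

section Corner

variable {K : Type*} [Field K] {β : K}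

theorem leftDemazure_stairFactor_mul {a i : ℕ} {t : ℕ → K}
    {P : (ℕ → K) → MvPolynomial ℕ K}
    (ht₀ : 1 + β * t i ≠ 0) (ht₁ : 1 + β * t (i + 1) ≠ 0) (htt : t i ≠ t (i + 1))
    (hP : P (swapVal t i) = P t) :
    leftDemazure β i (fun s => stairFactor β s (a, i) * P s) t = P t := by
  have hswap₀ : swapVal t i i = t (i + 1) := if_pos rfl
  have hswap₁ : swapVal t i (i + 1) = t i := by simp [swapVal]
  have h₀ : (C (1 + β * t i) * C (1 + β * t i)⁻¹ : MvPolynomial ℕ K) = 1 := by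
    rw [← C_mul, mul_inv_cancel₀ ht₀, C_1]
  have h₁ : (C (1 + β * t (i + 1)) * C (1 + β * t (i + 1))⁻¹ : MvPolynomial ℕ K) = 1 := by
    rw [← C_mul, mul_inv_cancel₀ ht₁, C_1]
  have hd : (C (t i - t (i + 1))⁻¹ * (C (t i) - C (t (i + 1))) : MvPolynomial ℕ K) = 1 := by
    rw [← C_sub, ← C_mul, inv_mul_cancel₀ (sub_ne_zero.mpr htt), C_1]
  simp only [leftDemazure, stairFactor, hswap₀, hP]
  linear_combination (-C (t i - t (i + 1))⁻¹ * (X a - C (t i)) * P t) * h₀ +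
    (C (t i - t (i + 1))⁻¹ * (X a - C (t (i + 1))) * P t) * h₁ + P t * hd

theorem demazureNum_stairFactor_mul {a b : ℕ} {t : ℕ → K} {P : MvPolynomial ℕ K}
    (ht : 1 + β * t b ≠ 0) (hP : rename (Equiv.swap a (a + 1)) P = P) :
    demazureNum β a (stairFactor β t (a, b) * P) = (X a - X (a + 1)) * P := by
  have h : (C (1 + β * t b)⁻¹ * (1 + C β * C (t b)) : MvPolynomial ℕ K) = 1 := by
    rw [← C_mul, ← C_1, ← C_add, ← C_mul, inv_mul_cancel₀ ht]
  simp only [demazureNum_apply, stairFactor, map_mul, map_sub, rename_C, rename_X,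
    Equiv.swap_apply_left, hP]
  linear_combination ((X a - X (a + 1)) * P) * h

end Corner

section Grothendieck

variable {K : Type*} [Field K] {β : K} {G : (ℕ → K) → Equiv.Perm ℕ → MvPolynomial ℕ K}

theorem GrothFamily.mul_eq_demazureNum (hG : GrothFamily β G) {t : ℕ → K}
    (ht : ∀ j, 1 + β * t j ≠ 0) {w : Equiv.Perm ℕ} {j : ℕ} (h : w (j + 1) < w j) :
    (X j - X (j + 1)) * G t (w * sTr j) = demazureNum β j (G t w) :=
  (hG t ht).2 w j h

/-- `π_j` commutes with `ϖ_i`, as they act on different sets of variables. -/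
theorem GrothFamily.mul_leftDemazure_mul_sTr (hG : GrothFamily β G) {t : ℕ → K}
    (ht : ∀ j, 1 + β * t j ≠ 0) (i : ℕ) {w : Equiv.Perm ℕ} {j : ℕ}
    (h : w (j + 1) < w j) :
    (X j - X (j + 1)) * leftDemazure β i (G · (w * sTr j)) t =
      demazureNum β j (leftDemazure β i (G · w) t) := by
  have ht' := one_add_mul_swapVal_ne_zero ht i
  rw [← LinearMap.mulLeft_apply (R := K), map_leftDemazure, map_leftDemazure]
  simp only [leftDemazure, Function.comp_apply, LinearMap.mulLeft_apply,
    hG.mul_eq_demazureNum ht h, hG.mul_eq_demazureNum ht' h]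

theorem GrothFamily.revPerm_eq_prod (hG : GrothFamily β G) {t : ℕ → K}
    (ht : ∀ j, 1 + β * t j ≠ 0) (n : ℕ) :
    G t (revPerm n) = ∏ p ∈ staircase n, stairFactor β t p := by
  rw [(hG t ht).1 n, Finset.prod_finset_product (staircase n) (Finset.range n)
    (fun a => Finset.range (n - 1 - a))]
  · rfl
  · intro p
    simp only [mem_staircase, Finset.mem_range]
    omega

theorem GrothFamily.leftDemazure_revPerm (hG : GrothFamily β G) {n i : ℕ} (hi : i + 1 < n)
    {t : ℕ → K} (ht : ∀ j, 1 + β * t j ≠ 0) (htt : t i ≠ t (i + 1)) :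
    leftDemazure β i (G · (revPerm n)) t = G t (sTr i * revPerm n) := by
  set r := n - 2 - i
  set P : (ℕ → K) → MvPolynomial ℕ K :=
    fun s => ∏ p ∈ (staircase n).erase (r, i), stairFactor β s p
  have hfactor : ∀ s : ℕ → K, (∀ j, 1 + β * s j ≠ 0) →
      G s (revPerm n) = stairFactor β s (r, i) * P s := fun s hs => by
    rw [hG.revPerm_eq_prod hs, Finset.mul_prod_erase _ _ (mem_staircase.mpr (by omega))]
  have hdesc : revPerm n (r + 1) < revPerm n r := by
    rw [revPerm_apply (by omega), revPerm_apply (by omega)]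
    omega
  have ht' := one_add_mul_swapVal_ne_zero ht i
  calc leftDemazure β i (G · (revPerm n)) t
      = leftDemazure β i (fun s => stairFactor β s (r, i) * P s) t := by
        simp only [leftDemazure, hfactor t ht, hfactor _ ht']
    _ = P t := leftDemazure_stairFactor_mul (ht i) (ht (i + 1)) htt
        (prod_staircase_erase_swapVal β t hi)
    _ = G t (revPerm n * sTr r) := by
        refine mul_left_cancel₀ (X_sub_X_succ_ne_zero r) ?_
        rw [hG.mul_eq_demazureNum ht hdesc, hfactor t ht,
          demazureNum_stairFactor_mul (ht i) (rename_prod_staircase_erase β t hi)]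
    _ = G t (sTr i * revPerm n) := by rw [sTr_mul_revPerm hi]

theorem GrothFamily.leftDemazure_mul_sTr (hG : GrothFamily β G) {t : ℕ → K}
    (ht : ∀ j, 1 + β * t j ≠ 0) {i j : ℕ} {w : Equiv.Perm ℕ} (hdesc : w (j + 1) < w j)
    (hw : leftDemazure β i (G · w) t =
      if w⁻¹ (i + 1) < w⁻¹ i then G t (sTr i * w) else -(C β * G t w)) :
    leftDemazure β i (G · (w * sTr j)) t =
      if (w * sTr j)⁻¹ (i + 1) < (w * sTr j)⁻¹ i then G t (sTr i * (w * sTr j))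
      else -(C β * G t (w * sTr j)) := by
  have hinv : ∀ x, (w * sTr j)⁻¹ x = sTr j (w⁻¹ x) := fun x => by
    rw [mul_inv_rev, Equiv.Perm.mul_apply, sTr_inv]
  have hrec := hG.mul_eq_demazureNum ht hdesc
  refine mul_left_cancel₀ (X_sub_X_succ_ne_zero j) ?_
  rw [hG.mul_leftDemazure_mul_sTr ht i hdesc, hw, hinv, hinv]
  by_cases hL : w⁻¹ (i + 1) < w⁻¹ i
  · rw [if_pos hL]
    by_cases hcorner : w⁻¹ (i + 1) = j ∧ w⁻¹ i = j + 1
    · -- `s_i w = w s_j`, and `π_j` acts as `-β` on `𝔊_{w s_j}`, which lies in its image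
      have hcomm : sTr i * w = w * sTr j := by
        rw [sTr, sTr, Equiv.mul_swap_eq_swap_mul, ← Equiv.Perm.inv_eq_iff_eq.mp hcorner.1,
          ← Equiv.Perm.inv_eq_iff_eq.mp hcorner.2, Equiv.swap_comm]
      rw [hcorner.1, hcorner.2, sTr_apply_left, sTr_apply_right, if_neg (by omega), hcomm,
        demazureNum_of_rename_swap_eq (rename_swap_eq_of_mul_eq_demazureNum hrec)]
      ring
    · have hdesc' : (sTr i * w) (j + 1) < (sTr i * w) j := by
        refine sTr_lt_sTr hdesc fun h => hcorner ⟨?_, ?_⟩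
        · rw [Equiv.Perm.inv_eq_iff_eq, h.2]
        · rw [Equiv.Perm.inv_eq_iff_eq, h.1]
      rw [if_pos (sTr_lt_sTr hL hcorner), ← hG.mul_eq_demazureNum ht hdesc', mul_assoc]
  · have hne : w⁻¹ i ≠ w⁻¹ (i + 1) := by simp
    have hlt : sTr j (w⁻¹ i) < sTr j (w⁻¹ (i + 1)) := by
      refine sTr_lt_sTr (by omega) fun h => ?_
      have := Equiv.Perm.inv_eq_iff_eq.mp h.1
      have := Equiv.Perm.inv_eq_iff_eq.mp h.2
      omega
    rw [if_neg hL, if_neg (by omega), map_neg, C_mul', map_smul, ← hrec, smul_eq_C_mul]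
    ring

theorem GrothFamily.leftDemazure_eq (hG : GrothFamily β G) {n i : ℕ} (hi : i + 1 < n)
    {t : ℕ → K} (ht : ∀ j, 1 + β * t j ≠ 0) (htt : t i ≠ t (i + 1))
    {w : Equiv.Perm ℕ} (hw : InSn n w) :
    leftDemazure β i (G · w) t =
      if w⁻¹ (i + 1) < w⁻¹ i then G t (sTr i * w) else -(C β * G t w) := by
  refine InSn.induction_revPerm (P := fun w => leftDemazure β i (G · w) t = _) ?_
    (fun _ _ _ _ hdesc ih => hG.leftDemazure_mul_sTr ht hdesc ih) hw
  rw [revPerm_inv_apply (by omega), revPerm_inv_apply (by omega), if_pos (by omega)]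
  exact hG.leftDemazure_revPerm hi ht htt

end Grothendieck

/-- Proposition `Prop:LDO` of the paper.  For every `w ∈ S_n`
and every simple transposition `s_i`, the left Demazure operator
`ϖ_i f = -((1+βt_i)f - (1+βt_{i+1})·f|_{t_i↔t_{i+1}})/(t_i - t_{i+1})`, acting on
the `t`-variables, satisfies `ϖ_i 𝔊_w(x,t) = 𝔊_{s_i w}(x,t)` if
`ℓ(s_i w) < ℓ(w)`, and `ϖ_i 𝔊_w(x,t) = -β·𝔊_w(x,t)` if `ℓ(s_i w) > ℓ(w)`. -/
theorem left_demazure_on_grothendieck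
    {K : Type*} [Field K] (β : K)
    (G : (ℕ → K) → Equiv.Perm ℕ → MvPolynomial ℕ K)
    (hG : GrothFamily β G)
    (n : ℕ) (w : Equiv.Perm ℕ) (hw : InSn n w)
    (i : ℕ) (hi : i + 1 < n)
    (t : ℕ → K) (ht : ∀ j, 1 + β * t j ≠ 0) (htt : t i ≠ t (i + 1)) :
    (len (sTr i * w) < len w →
      C ((t i - t (i + 1))⁻¹) *
          (-(C (1 + β * t i) * G t w - C (1 + β * t (i + 1)) * G (swapVal t i) w))
        = G t (sTr i * w)) ∧
    (len w < len (sTr i * w) →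
      C ((t i - t (i + 1))⁻¹) *
          (-(C (1 + β * t i) * G t w - C (1 + β * t (i + 1)) * G (swapVal t i) w))
        = -(C β * G t w)) := by
  have key : leftDemazure β i (G · w) t = _ := hG.leftDemazure_eq hi ht htt hw
  have hne : w⁻¹ i ≠ w⁻¹ (i + 1) := by simp
  constructor
  · intro hlen
    refine key.trans (if_pos ?_)
    by_contra h
    have := hw.len_sTr_mul (lt_of_le_of_ne (not_lt.mp h) hne)
    omega
  · intro hlen
    refine key.trans (if_neg fun h => ?_)
    have := hw.len_sTr_mul_of_gt hi h
    omega
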